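/- Let α,r>0 and n a positive integer. There exists a constant C=C(α,r,n)>0 such that for every c>1, ∑_{ν∈rℤ^{2n}} e^{-(α/4)|ν|²} c^{|ν|} ≤ C·c^{(√(2n)/2)r + (2/α)log c}·(1 + (log c)^{2n−1}). -/

import Mathlib

open MeasureTheory ENNReal
open scoped ComplexOrder

noncomputable section

/-- `ℂⁿ` as a Euclidean space. -/
abbrev Cspace (n : ℕ) := EuclideanSpace ℂ (Fin n)

/-- Lebesgue measure on `ℂⁿ`. -/
instance CspaceMeasureSpace (n : ℕ) : MeasureSpace (Cspace n) where
  volume := (volume : Measure (Fin n → ℂ)).map (WithLp.toLp 2)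

/-- The (closed) cube in `ℂⁿ ≅ ℝ^{2n}` centered at `u` with side length `r`. -/
def cube {n : ℕ} (u : Cspace n) (r : ℝ) : Set (Cspace n) :=
  {z | ∀ j, |(z j).re - (u j).re| ≤ r / 2 ∧ |(z j).im - (u j).im| ≤ r / 2}

/-- A `d × d` complex matrix acting on the Euclidean space `ℂᵈ`. -/
def matAct {d : ℕ} (M : Matrix (Fin d) (Fin d) ℂ) (x : EuclideanSpace ℂ (Fin d)) :
    EuclideanSpace ℂ (Fin d) :=
  Matrix.toEuclideanLin M x

/-- The operator norm of a `d × d` matrix acting on Euclidean `ℂᵈ`. -/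
def matOpNorm {d : ℕ} (M : Matrix (Fin d) (Fin d) ℂ) : ℝ :=
  ‖(Matrix.toEuclideanCLM (𝕜 := ℂ) M :
      EuclideanSpace ℂ (Fin d) →L[ℂ] EuclideanSpace ℂ (Fin d))‖

open scoped Classical in
/-- The real power `M ^ t` of a positive definite (Hermitian) matrix, defined through the
spectral functional calculus; junk value `1` if `M` is not positive definite. -/
def matRpow {d : ℕ} (M : Matrix (Fin d) (Fin d) ℂ) (t : ℝ) : Matrix (Fin d) (Fin d) ℂ :=
  if h : M.PosDef then h.1.cfc (fun x => x ^ t) else 1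

/-- A matrix weight: measurable, a.e. positive definite (hence invertible self-adjoint),
with `W` and `W⁻¹` locally integrable. -/
def IsMatrixWeight {n d : ℕ} (W : Cspace n → Matrix (Fin d) (Fin d) ℂ) : Prop :=
  (∀ i j, Measurable fun z => W z i j) ∧
  (∀ᵐ z ∂(volume : Measure (Cspace n)), (W z).PosDef) ∧
  (∀ i j, LocallyIntegrable (fun z => W z i j) volume) ∧
  (∀ i j, LocallyIntegrable (fun z => (W z)⁻¹ i j) volume)

/-- The Gaussian density `(α/π)^n e^{-α|u|²}`. -/
def gaussDensity {n : ℕ} (α : ℝ) (u : Cspace n) : ℝ :=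
  (α / Real.pi) ^ n * Real.exp (-α * ‖u‖ ^ 2)

/-- The `L^p_α`-norm `(∫ ‖f(z)‖^p e^{-(pα/2)|z|²} dv(z))^{1/p}` (value in `ℝ≥0∞`). -/
def lpNormGen {E : Type*} [NormedAddCommGroup E] {n : ℕ} (α p : ℝ) (f : Cspace n → E) : ℝ≥0∞ :=
  (∫⁻ z, (‖f z‖₊ : ℝ≥0∞) ^ p * ENNReal.ofReal (Real.exp (-(p * α / 2) * ‖z‖ ^ 2))) ^ (1 / p)

/-- The norm of `L^p_{α,W}(ℂⁿ;ℂᵈ)`. -/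
def wLpNorm {n d : ℕ} (α p : ℝ) (W : Cspace n → Matrix (Fin d) (Fin d) ℂ)
    (f : Cspace n → EuclideanSpace ℂ (Fin d)) : ℝ≥0∞ :=
  lpNormGen α p (fun z => matAct (matRpow (W z) (1 / p)) (f z))

/-- The norm of `L^∞_{α,V}(ℂⁿ;ℂᵈ)`: `ess sup |V(z) f(z)| e^{-(α/2)|z|²}`. -/
def wLinfNorm {n d : ℕ} (α : ℝ) (V : Cspace n → Matrix (Fin d) (Fin d) ℂ)
    (f : Cspace n → EuclideanSpace ℂ (Fin d)) : ℝ≥0∞ :=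
  essSup (fun z => (‖matAct (V z) (f z)‖₊ : ℝ≥0∞) *
    ENNReal.ofReal (Real.exp (-(α / 2) * ‖z‖ ^ 2))) volume

/-- The Fock projection `P_α f(z) = ∫ f(u) e^{α⟨z,u⟩} dλ_α(u)`. -/
def fockProj {n d : ℕ} (α : ℝ) (f : Cspace n → EuclideanSpace ℂ (Fin d)) :
    Cspace n → EuclideanSpace ℂ (Fin d) :=
  fun z => ∫ u, gaussDensity α u • (Complex.exp ((α : ℂ) * (inner ℂ u z : ℂ)) • f u)

/-- The maximal Fock projection
`P⁺_{α,W} f(z) = ∫ |W^{1/p}(z) W^{-1/p}(u) f(u)| |e^{α⟨z,u⟩}| dλ_α(u)`. -/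
def maxFockProj {n d : ℕ} (α p : ℝ) (W : Cspace n → Matrix (Fin d) (Fin d) ℂ)
    (f : Cspace n → EuclideanSpace ℂ (Fin d)) : Cspace n → ℝ :=
  fun z => ∫ u, gaussDensity α u *
    (‖matAct (matRpow (W z) (1 / p)) (matAct (matRpow (W u) (-(1 / p))) (f u))‖ *
      ‖Complex.exp ((α : ℂ) * (inner ℂ u z : ℂ))‖)

/-- `P_α` is bounded on `L^p_{α,W}(ℂⁿ;ℂᵈ)` with constant `C`. -/
def FockProjBdd {n d : ℕ} (α p : ℝ) (W : Cspace n → Matrix (Fin d) (Fin d) ℂ) (C : ℝ) : Prop :=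
  ∀ f : Cspace n → EuclideanSpace ℂ (Fin d), Measurable f → wLpNorm α p W f < ⊤ →
    wLpNorm α p W (fockProj α f) ≤ ENNReal.ofReal C * wLpNorm α p W f

/-- `P⁺_{α,W}` is bounded from `L^p_α(ℂⁿ;ℂᵈ)` to `L^p_α(ℂⁿ;ℂ)` with constant `C`. -/
def MaxFockProjBdd {n d : ℕ} (α p : ℝ) (W : Cspace n → Matrix (Fin d) (Fin d) ℂ) (C : ℝ) : Prop :=
  ∀ f : Cspace n → EuclideanSpace ℂ (Fin d), Measurable f → lpNormGen α p f < ⊤ →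
    lpNormGen α p (maxFockProj α p W f) ≤ ENNReal.ofReal C * lpNormGen α p f

/-- The normalized reproducing kernel `k^α_u(z) = e^{α⟨z,u⟩ - (α/2)|u|²}`. -/
def fockKernel {n : ℕ} (α : ℝ) (u : Cspace n) (z : Cspace n) : ℂ :=
  Complex.exp ((α : ℂ) * (inner ℂ u z : ℂ) - ((α / 2 * ‖u‖ ^ 2 : ℝ) : ℂ))

/-- The operator `P_{α,u,r} f = χ_{Q_r(u)} k^α_u ∫_{Q_r(u)} f conj(k^α_u) dλ_α`. -/
def cubeProj {n d : ℕ} (α : ℝ) (u : Cspace n) (r : ℝ)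
    (f : Cspace n → EuclideanSpace ℂ (Fin d)) : Cspace n → EuclideanSpace ℂ (Fin d) :=
  fun z => Set.indicator (cube u r)
    (fun w => fockKernel α u w •
      (∫ ζ in cube u r, gaussDensity α ζ • ((starRingEnd ℂ) (fockKernel α u ζ) • f ζ))) z

/-- The pairing `⟨f,g⟩_α = ∫ ⟨f(z), g(z)⟩ e^{-α|z|²} dv(z)` (the inner product being linear
in the first slot and conjugate-linear in the second one). -/
def fockPairing {n d : ℕ} (α : ℝ) (f g : Cspace n → EuclideanSpace ℂ (Fin d)) : ℂ :=
  ∫ z, Real.exp (-α * ‖z‖ ^ 2) • (inner ℂ (g z) (f z) : ℂ)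

/-- A norm on `ℂᵈ` (as a real-valued function). -/
def IsANorm {d : ℕ} (g : EuclideanSpace ℂ (Fin d) → ℝ) : Prop :=
  (∀ x, x ≠ 0 → 0 < g x) ∧ (∀ (c : ℂ) x, g (c • x) = ‖c‖ * g x) ∧
  (∀ x y, g (x + y) ≤ g x + g y)

/-- A metric: a measurable family of norms on `ℂᵈ` indexed by `ℂⁿ`. -/
def IsMetric {n d : ℕ} (ρ : Cspace n → EuclideanSpace ℂ (Fin d) → ℝ) : Prop :=
  (∀ z, IsANorm (ρ z)) ∧ (∀ x, Measurable fun z => ρ z x)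

/-- The dual norm `ρ*(x) = sup_{y ≠ 0} |⟨x,y⟩| / ρ(y)` (value in `ℝ≥0∞`). -/
def dualNormE {d : ℕ} (g : EuclideanSpace ℂ (Fin d) → ℝ) (x : EuclideanSpace ℂ (Fin d)) :
    ℝ≥0∞ :=
  ⨆ (y : EuclideanSpace ℂ (Fin d)) (_ : y ≠ 0),
    (‖(inner ℂ y x : ℂ)‖₊ : ℝ≥0∞) / ENNReal.ofReal (g y)

/-- The dual of an `ℝ≥0∞`-valued gauge on `ℂᵈ`. -/
def dualGaugeE {d : ℕ} (G : EuclideanSpace ℂ (Fin d) → ℝ≥0∞) (x : EuclideanSpace ℂ (Fin d)) :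
    ℝ≥0∞ :=
  ⨆ (y : EuclideanSpace ℂ (Fin d)) (_ : y ≠ 0), (‖(inner ℂ y x : ℂ)‖₊ : ℝ≥0∞) / G y

/-- The `q`-average of an `ℝ≥0∞`-valued gauge family over a set `Q`:
`((1/v(Q)) ∫_Q F_z(x)^q dv(z))^{1/q}`. -/
def avgGauge {n d : ℕ} (q : ℝ) (Q : Set (Cspace n))
    (F : Cspace n → EuclideanSpace ℂ (Fin d) → ℝ≥0∞) (x : EuclideanSpace ℂ (Fin d)) : ℝ≥0∞ :=
  ((∫⁻ z in Q, (F z x) ^ q) / volume Q) ^ (1 / q)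

/-- The averaged norm `ρ_{q,Q}(x) = ((1/v(Q)) ∫_Q ρ_z(x)^q dv(z))^{1/q}`. -/
def metricAvg {n d : ℕ} (q : ℝ) (Q : Set (Cspace n))
    (ρ : Cspace n → EuclideanSpace ℂ (Fin d) → ℝ) (x : EuclideanSpace ℂ (Fin d)) : ℝ≥0∞ :=
  avgGauge q Q (fun z y => ENNReal.ofReal (ρ z y)) x

/-- The averaged dual norm `ρ*_{p',Q}` where `p'` is the conjugate exponent of `p`
(`ess sup` over `Q` of the pointwise dual norms when `p = 1`, i.e. `p' = ∞`). -/
def metricDualAvg {n d : ℕ} (p : ℝ) (Q : Set (Cspace n))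
    (ρ : Cspace n → EuclideanSpace ℂ (Fin d) → ℝ) (x : EuclideanSpace ℂ (Fin d)) : ℝ≥0∞ :=
  if p = 1 then essSup (fun z => dualNormE (ρ z) x) (volume.restrict Q)
  else avgGauge (p / (p - 1)) Q (fun z => dualNormE (ρ z)) x

/-- The `A_{p,r}`-condition for a metric `ρ`, with constant `C`:
`ρ*_{p',Q}(x) ≤ C (ρ_{p,Q})*(x)` for all `x ∈ ℂᵈ` and all cubes `Q` of side length `r`. -/
def IsAprBound {n d : ℕ} (p r : ℝ) (ρ : Cspace n → EuclideanSpace ℂ (Fin d) → ℝ) (C : ℝ) :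
    Prop :=
  ∀ (u : Cspace n) (x : EuclideanSpace ℂ (Fin d)),
    metricDualAvg p (cube u r) ρ x ≤
      ENNReal.ofReal C * dualGaugeE (metricAvg p (cube u r) ρ) x

/-- `ρ` is an `A_{p,r}`-metric. -/
def IsAprMetric {n d : ℕ} (p r : ℝ) (ρ : Cspace n → EuclideanSpace ℂ (Fin d) → ℝ) : Prop :=
  ∃ C : ℝ, 0 ≤ C ∧ IsAprBound p r ρ C

/-- The metric `ρ_z(x) = |W^{1/p}(z) x|` associated with a matrix weight `W`. -/
def weightMetric {n d : ℕ} (p : ℝ) (W : Cspace n → Matrix (Fin d) (Fin d) ℂ) :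
    Cspace n → EuclideanSpace ℂ (Fin d) → ℝ :=
  fun z x => ‖matAct (matRpow (W z) (1 / p)) x‖

/-- `W` is an `A_{p,r}`-weight. -/
def IsAprWeight {n d : ℕ} (p r : ℝ) (W : Cspace n → Matrix (Fin d) (Fin d) ℂ) : Prop :=
  IsAprMetric p r (weightMetric p W)

end

noncomputable def latticeVecR {N : ℕ} (r : ℝ) (m : Fin N → ℤ) : EuclideanSpace ℝ (Fin N) :=
  (WithLp.equiv 2 (Fin N → ℝ)).symm fun i => r * (m i : ℝ)

/-!
By AM-GM, `(log c) t ≤ (α/8) t² + (2/α) (log c)²`, so every term of the sum is at most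
`c^{(2/α) log c} e^{-(α/8)|ν|²}`. The constant is the Gaussian lattice sum `∑_ν e^{-(α/8)|ν|²}`,
which converges because it factors into one-dimensional theta series.
-/

section

open Real

lemma summable_exp_neg_mul_int_sq {b : ℝ} (hb : 0 < b) :
    Summable fun k : ℤ => exp (-b * (k : ℝ) ^ 2) := by
  -- `e^{-b k²}` is the norm of the `k`-th term of `θ₂(0, (b/π) i)`.
  have hτ : 0 < (((b / π : ℝ) : ℂ) * Complex.I).im := by simp; positivity
  refine ((summable_jacobiTheta₂_term_iff 0 _).mpr hτ).norm.congr fun k => ?_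
  rw [norm_jacobiTheta₂_term]
  congr 1
  simp only [Complex.mul_im, Complex.ofReal_re, Complex.ofReal_im, Complex.I_re, Complex.I_im,
    Complex.zero_im]
  field_simp
  ring

lemma summable_prod_apply_of_nonneg {β : Type*} {f : β → ℝ} (hf₀ : 0 ≤ f) (hf : Summable f) :
    ∀ N : ℕ, Summable fun m : Fin N → β => ∏ i, f (m i)
  | 0 => .of_finite
  | N + 1 => by
    rw [← (Fin.consEquiv fun _ : Fin (N + 1) => β).summable_iff]
    refine (hf.mul_of_nonneg (summable_prod_apply_of_nonneg hf₀ hf N) hf₀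
      fun _ => Finset.prod_nonneg fun _ _ => hf₀ _).congr fun p => ?_
    simp [Fin.consEquiv, Fin.prod_univ_succ]

lemma norm_latticeVecR_sq {N : ℕ} (r : ℝ) (m : Fin N → ℤ) :
    ‖latticeVecR r m‖ ^ 2 = r ^ 2 * ∑ i, (m i : ℝ) ^ 2 := by
  rw [EuclideanSpace.norm_eq, sq_sqrt (by positivity), Finset.mul_sum]
  simp [latticeVecR, mul_pow]

lemma summable_exp_neg_mul_norm_latticeVecR_sq {N : ℕ} {b r : ℝ} (hb : 0 < b) (hr : r ≠ 0) :
    Summable fun m : Fin N → ℤ => exp (-b * ‖latticeVecR r m‖ ^ 2) := by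
  refine (summable_prod_apply_of_nonneg (fun _ => (exp_pos _).le)
    (summable_exp_neg_mul_int_sq (by positivity : 0 < b * r ^ 2)) N).congr fun m => ?_
  rw [← exp_sum, norm_latticeVecR_sq, Finset.mul_sum, Finset.mul_sum]
  congr 1
  exact Finset.sum_congr rfl fun i _ => by ring

lemma exp_neg_mul_sq_mul_rpow_le {α c : ℝ} (hα : 0 < α) (hc : 0 < c) (t : ℝ) :
    exp (-(α / 4) * t ^ 2) * c ^ t ≤ c ^ (2 / α * log c) * exp (-(α / 8) * t ^ 2) := by
  rw [rpow_def_of_pos hc, rpow_def_of_pos hc, ← exp_add, ← exp_add, exp_le_exp]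
  have hsq : (α * t - 4 * log c) ^ 2 / (8 * α) =
      α / 8 * t ^ 2 - log c * t + 2 / α * log c ^ 2 := by
    field_simp
    ring
  have hamgm := div_nonneg (sq_nonneg (α * t - 4 * log c)) (by positivity : 0 ≤ 8 * α)
  rw [hsq] at hamgm
  linarith

end

theorem stmt18_general {n : ℕ} (α r : ℝ) (hα : 0 < α) (hr : 0 < r) :
    ∃ C : ℝ, 0 < C ∧ ∀ c : ℝ, 1 < c →
      (∑' m : Fin (2 * n) → ℤ,
          Real.exp (-(α / 4) * ‖latticeVecR r m‖ ^ 2) * c ^ ‖latticeVecR r m‖) ≤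
        C * c ^ (Real.sqrt (2 * n) / 2 * r + 2 / α * Real.log c) *
          (1 + Real.log c ^ (2 * n - 1)) := by
  have hS : Summable fun m : Fin (2 * n) → ℤ => Real.exp (-(α / 8) * ‖latticeVecR r m‖ ^ 2) :=
    summable_exp_neg_mul_norm_latticeVecR_sq (by positivity) hr.ne'
  refine ⟨_, hS.tsum_pos (fun _ => (Real.exp_pos _).le) 0 (Real.exp_pos _), fun c hc => ?_⟩
  have hc₀ : 0 < c := by linarith
  have hterm := fun m : Fin (2 * n) → ℤ => exp_neg_mul_sq_mul_rpow_le hα hc₀ ‖latticeVecR r m‖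
  have hcS := hS.mul_left (c ^ (2 / α * Real.log c))
  calc _ ≤ ∑' m : Fin (2 * n) → ℤ,
        c ^ (2 / α * Real.log c) * Real.exp (-(α / 8) * ‖latticeVecR r m‖ ^ 2) :=
        (hcS.of_nonneg_of_le (fun _ => by positivity) hterm).tsum_le_tsum hterm hcS
    _ = (∑' m, Real.exp (-(α / 8) * ‖latticeVecR r m‖ ^ 2)) * c ^ (2 / α * Real.log c) := by
        rw [tsum_mul_left, mul_comm]
    _ ≤ (∑' m, Real.exp (-(α / 8) * ‖latticeVecR r m‖ ^ 2)) *
          c ^ (Real.sqrt (2 * n) / 2 * r + 2 / α * Real.log c) * 1 := by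
        rw [mul_one]
        gcongr
        · exact hc.le
        · exact le_add_of_nonneg_left (by positivity)
    _ ≤ _ := by
        gcongr
        exact le_add_of_nonneg_right (pow_nonneg (Real.log_nonneg hc.le) _)

/-- for `α, r > 0` there is `C = C(α,r,n) > 0` such that for every `c > 1`,
`∑_{ν ∈ rℤ^{2n}} e^{-(α/4)|ν|²} c^{|ν|} ≤ C c^{(√(2n)/2) r + (2/α) log c} (1 + (log c)^{2n-1})`. -/
theorem stmt18 {n : ℕ} (hn : 0 < n) (α r : ℝ) (hα : 0 < α) (hr : 0 < r) :
    ∃ C : ℝ, 0 < C ∧ ∀ c : ℝ, 1 < c →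
      (∑' m : Fin (2 * n) → ℤ,
          Real.exp (-(α / 4) * ‖latticeVecR r m‖ ^ 2) * c ^ ‖latticeVecR r m‖) ≤
        C * c ^ (Real.sqrt (2 * n) / 2 * r + 2 / α * Real.log c) *
          (1 + Real.log c ^ (2 * n - 1)) :=
  stmt18_general α r hα hr
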